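/- For every ε ∈ (0,1) and every x ∈ ℝ, log(log(|x|+e)) ≤ log(2·log(ε|x|+e)) + log(log(ε⁻¹+e)). -/

import Mathlib

/-!
Since `ε · ε⁻¹ = 1` and `e ≥ 1`, expanding gives `|x| + e ≤ (ε|x| + e)(ε⁻¹ + e)`, so
`log (|x| + e) ≤ a + b` with `a = log (ε|x| + e) ≥ 1` and `b = log (ε⁻¹ + e) ≥ 1`.
For `a, b ≥ 1` one has `a + b ≤ 2ab`, and taking logarithms once more gives the claim.
-/

open Real

lemma add_le_two_mul_mul_of_one_le {α : Type*} [CommRing α] [LinearOrder α] [IsStrictOrderedRing α]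
    {a b : α} (ha : 1 ≤ a) (hb : 1 ≤ b) : a + b ≤ 2 * a * b := by
  nlinarith [mul_nonneg (sub_nonneg.2 ha) (sub_nonneg.2 hb)]

lemma Real.log_add_le_log_two_mul_add_log {a b : ℝ} (ha : 1 ≤ a) (hb : 1 ≤ b) :
    log (a + b) ≤ log (2 * a) + log b := by
  rw [← log_mul (by positivity) (by positivity)]
  exact log_le_log (by positivity) (add_le_two_mul_mul_of_one_le ha hb)

lemma Real.one_le_log_add_exp_one {t : ℝ} (ht : 0 ≤ t) : 1 ≤ log (t + exp 1) := by
  simpa using log_le_log (exp_pos 1) (le_add_of_nonneg_left ht)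

lemma Real.add_exp_one_le_mul_add_exp_one {ε y : ℝ} (hε : 0 < ε) (hy : 0 ≤ y) :
    y + exp 1 ≤ (ε * y + exp 1) * (ε⁻¹ + exp 1) := by
  have hεε : ε * ε⁻¹ = 1 := mul_inv_cancel₀ hε.ne'
  have he : 1 ≤ exp 1 := one_le_exp zero_le_one
  nlinarith [mul_nonneg hε.le hy, inv_pos.2 hε, exp_pos 1]

lemma Real.log_add_exp_one_le {ε y : ℝ} (hε : 0 < ε) (hy : 0 ≤ y) :
    log (y + exp 1) ≤ log (ε * y + exp 1) + log (ε⁻¹ + exp 1) := by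
  rw [← log_mul (by positivity) (by positivity)]
  exact log_le_log (by positivity) (add_exp_one_le_mul_add_exp_one hε hy)

/-- For every `ε ∈ (0,1)` and every real `x`,
`log(log(|x|+e)) ≤ log(2·log(ε|x|+e)) + log(log(ε⁻¹+e))`. -/
theorem log_log_le_log_two_log_add (ε : ℝ) (hε : ε ∈ Set.Ioo (0 : ℝ) 1) (x : ℝ) :
    Real.log (Real.log (|x| + Real.exp 1)) ≤
      Real.log (2 * Real.log (ε * |x| + Real.exp 1)) +
        Real.log (Real.log (ε⁻¹ + Real.exp 1)) := by
  have hε0 : 0 < ε := hε.1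
  have hx : 0 ≤ |x| := abs_nonneg x
  calc log (log (|x| + exp 1))
      ≤ log (log (ε * |x| + exp 1) + log (ε⁻¹ + exp 1)) :=
        log_le_log (by linarith [one_le_log_add_exp_one hx]) (log_add_exp_one_le hε0 hx)
    _ ≤ log (2 * log (ε * |x| + exp 1)) + log (log (ε⁻¹ + exp 1)) :=
        log_add_le_log_two_mul_add_log (one_le_log_add_exp_one (by positivity))
          (one_le_log_add_exp_one (by positivity))
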